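/- Let N be the subalgebra of (T(k^T), ⧢̃) generated by the degree-1 elements, graded by N = ⊕_{(w,j)} N_{(w,j)} where N_{(w,j)} is spanned by products t₁ ⧢̃ ⋯ ⧢̃ t_j with t₁⋯t_j = w. If N_{(w,j)} ≠ 0 then ℓ_T(w) ≤ j and ℓ_T(w) ≡ j (mod 2). -/

import Mathlib

variable (k : Type*) [Field k] {B W : Type*} [Group W]

/-- The reflection length of `w`: the minimal number of reflections whose product is `w`. -/
noncomputable def reflLen (M : CoxeterMatrix B) (cs : CoxeterSystem M W) (w : W) : ℕ :=
  sInf {n | ∃ l : List W, (∀ t ∈ l, cs.IsReflection t) ∧ l.length = n ∧ l.prod = w}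

/-- The twisted shuffle product `⧢̃` on basis elements, where `t^u = u t u`. -/
noncomputable def tsh : List W → List W → (List W →₀ k)
  | [], l₂ => Finsupp.single l₂ 1
  | l₁, [] => Finsupp.single l₁ 1
  | t :: ts, u :: us =>
      Finsupp.mapDomain (t :: ·) (tsh ts (u :: us)) +
        ((-1 : k) ^ (ts.length + 1)) •
          Finsupp.mapDomain (u :: ·) (tsh ((t :: ts).map (fun x => u * x * u)) us)
  termination_by l₁ l₂ => l₁.length + l₂.length
  decreasing_by
    all_goals simp

/-- The iterated twisted shuffle product `t₁ ⧢̃ t₂ ⧢̃ ⋯ ⧢̃ t_j` of degree-one elements. -/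
noncomputable def tshList : List W → (List W →₀ k)
  | [] => Finsupp.single [] 1
  | t :: rest =>
      ((Finsupp.lift (List W →₀ k) k (List W)) (tsh k [t])) (tshList rest)

/-- The homogeneous component `N_{(w,j)}` of the Nichols algebra: the span of the
products `t₁ ⧢̃ ⋯ ⧢̃ t_j` over lists of reflections with `t₁ ⋯ t_j = w`. -/
noncomputable def nicholsComponent (M : CoxeterMatrix B) (cs : CoxeterSystem M W)
    (w : W) (j : ℕ) : Submodule k (List W →₀ k) :=
  Submodule.span k {x | ∃ l : List W, (∀ t ∈ l, cs.IsReflection t) ∧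
    l.length = j ∧ l.prod = w ∧ x = tshList k l}

/-!
A nonzero `N_{(w,j)}` contains some `t₁ ⧢̃ ⋯ ⧢̃ t_j`, so `w` is a product of `j` reflections and
`ℓ_T(w) ≤ j`. Reflections have odd Coxeter length, so a product of `n` reflections has Coxeter
length `≡ n (mod 2)`; comparing a shortest reflection word for `w` with `t₁ ⋯ t_j` through `ℓ(w)`
gives the parity.
-/

namespace CoxeterSystem

variable {M : CoxeterMatrix B} (cs : CoxeterSystem M W)

theorem length_prod_mod_two_of_isReflection {l : List W} (hl : ∀ t ∈ l, cs.IsReflection t) :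
    cs.length l.prod % 2 = l.length % 2 := by
  induction l with
  | nil => simp
  | cons t l ih =>
    have ht : cs.length t % 2 = 1 := Nat.odd_iff.mp (hl t List.mem_cons_self).odd_length
    have hl' := ih fun u hu => hl u (List.mem_cons_of_mem t hu)
    rw [List.prod_cons, cs.length_mul_mod_two, List.length_cons]
    omega

end CoxeterSystem

section ReflectionLength

variable {M : CoxeterMatrix B} (cs : CoxeterSystem M W)

theorem reflLen_le_length {w : W} {l : List W} (hl : ∀ t ∈ l, cs.IsReflection t)
    (hw : l.prod = w) : reflLen M cs w ≤ l.length :=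
  Nat.sInf_le ⟨l, hl, rfl, hw⟩

theorem exists_isReflection_prod_length_eq_reflLen (w : W) :
    ∃ l : List W, (∀ t ∈ l, cs.IsReflection t) ∧ l.length = reflLen M cs w ∧ l.prod = w := by
  obtain ⟨ω, rfl⟩ := cs.wordProd_surjective w
  have hsimple : ∀ t ∈ ω.map cs.simple, cs.IsReflection t := by
    simp only [List.mem_map]
    rintro _ ⟨i, -, rfl⟩
    exact cs.isReflection_simple i
  exact Nat.sInf_mem (s := {n | ∃ l : List W, (∀ t ∈ l, cs.IsReflection t) ∧ l.length = n ∧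
    l.prod = cs.wordProd ω}) ⟨_, _, hsimple, rfl, rfl⟩

theorem reflLen_mod_two (w : W) : reflLen M cs w % 2 = cs.length w % 2 := by
  obtain ⟨l, hl, hlen, hprod⟩ := exists_isReflection_prod_length_eq_reflLen cs w
  rw [← hlen, ← cs.length_prod_mod_two_of_isReflection hl, hprod]

end ReflectionLength

theorem exists_isReflection_prod_of_nicholsComponent_ne_bot {M : CoxeterMatrix B}
    {cs : CoxeterSystem M W} {w : W} {j : ℕ} (h : nicholsComponent k M cs w j ≠ ⊥) :
    ∃ l : List W, (∀ t ∈ l, cs.IsReflection t) ∧ l.length = j ∧ l.prod = w := by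
  contrapose! h
  refine Submodule.span_eq_bot.mpr ?_
  rintro _ ⟨l, hl, hlen, hprod, -⟩
  exact absurd hprod (h l hl hlen)

theorem nicholsComponent_ne_bot (M : CoxeterMatrix B) (cs : CoxeterSystem M W)
    (w : W) (j : ℕ) (h : nicholsComponent k M cs w j ≠ ⊥) :
    reflLen M cs w ≤ j ∧ reflLen M cs w % 2 = j % 2 := by
  obtain ⟨l, hl, rfl, hprod⟩ := exists_isReflection_prod_of_nicholsComponent_ne_bot k h
  refine ⟨reflLen_le_length cs hl hprod, ?_⟩
  rw [reflLen_mod_two, ← hprod, cs.length_prod_mod_two_of_isReflection hl]
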